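/- arXiv:1603.08598 — 3 statements merged into one kernel-verified Lean document; each statement's English description precedes it below -/
import Mathlib

section
/- Let K be a Henselian valued field of characteristic zero with residue characteristic p > 0 and ramification index e > 0, and let n > e not be divisible by p. Then for every x in the valuation ring O_K, the polynomial y^n − p·x^n − 1 has a root in K. -/
/-- A valued field (with additive valuation `v`) is Henselian if Hensel's lemma holds:
whenever `f` is a polynomial with coefficients in the valuation ring and `a` is in the
valuation ring with `v (f a) > 2 · v (f' a)`, then `f` has a root in the valuation ring. -/
def AddValuation.IsHenselian {K Γ : Type*} [Field K] [AddCommGroup Γ] [LinearOrder Γ] [IsOrderedAddMonoid Γ]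
    (v : AddValuation K (WithTop Γ)) : Prop :=
  ∀ f : Polynomial K, (∀ i, 0 ≤ v (f.coeff i)) →
    ∀ a : K, 0 ≤ v a →
      2 • v (Polynomial.eval a (Polynomial.derivative f)) < v (Polynomial.eval a f) →
      ∃ b : K, 0 ≤ v b ∧ Polynomial.eval b f = 0

/-!
Since `p ∤ n` and `v p > 0`, the integer `n` is a unit of the valuation ring, so `X ^ n - c`
with `c = p x ^ n + 1` has derivative of value `0` at `1`, while its value at `1` is
`v (p x ^ n) > 0`. Hensel's lemma at the approximate root `1` gives an `n`-th root of `c`.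
-/

namespace AddValuation

variable {K Γ : Type*} [Field K] [AddCommGroup Γ] [LinearOrder Γ] [IsOrderedAddMonoid Γ]
  (v : AddValuation K (WithTop Γ))

theorem natCast_nonneg (m : ℕ) : 0 ≤ v (m : K) := by
  induction m with
  | zero => simp
  | succ k ih =>
    push_cast
    exact v.map_le_add ih (by simp)

theorem intCast_nonneg (m : ℤ) : 0 ≤ v (m : K) := by
  obtain ⟨k, rfl | rfl⟩ := Int.eq_nat_or_neg m
  · exact_mod_cast v.natCast_nonneg k
  · simpa using v.natCast_nonneg k

theorem intCast_eq_zero_of_isCoprime {a b : ℤ} (hab : IsCoprime a b) (hb : 0 < v (b : K)) :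
    v (a : K) = 0 := by
  refine le_antisymm (not_lt.1 fun ha => ?_) (v.intCast_nonneg a)
  obtain ⟨s, t, hst⟩ := hab
  have hpos : 0 < v ((s : K) * a + t * b) := by
    refine lt_min_iff.2 ⟨?_, ?_⟩ |>.trans_le (v.map_add _ _) <;> rw [v.map_mul]
    · exact ha.trans_le (le_add_of_nonneg_left (v.intCast_nonneg s))
    · exact hb.trans_le (le_add_of_nonneg_left (v.intCast_nonneg t))
  have hone : (s : K) * a + t * b = 1 := by exact_mod_cast congrArg (Int.cast : ℤ → K) hst
  simp [hone] at hpos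

theorem natCast_eq_zero_of_not_dvd {p n : ℕ} (hp : p.Prime) (hvp : 0 < v (p : K))
    (hpn : ¬ p ∣ n) : v (n : K) = 0 := by
  have hcop : IsCoprime (n : ℤ) p :=
    Nat.isCoprime_iff_coprime.2 ((hp.coprime_iff_not_dvd.2 hpn).symm)
  exact_mod_cast v.intCast_eq_zero_of_isCoprime hcop (by exact_mod_cast hvp)

theorem coeff_X_pow_sub_C_nonneg {c : K} (hc : 0 ≤ v c) (n i : ℕ) :
    0 ≤ v ((Polynomial.X ^ n - Polynomial.C c).coeff i) := by
  rw [Polynomial.coeff_sub, Polynomial.coeff_X_pow, Polynomial.coeff_C]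
  apply v.map_le_sub <;> split_ifs <;> simp [hc]

theorem IsHenselian.exists_pow_eq {v : AddValuation K (WithTop Γ)} (hv : v.IsHenselian)
    {n : ℕ} {c : K} (hc : 2 • v (n : K) < v (c - 1)) : ∃ y : K, y ^ n = c := by
  have hc0 : 0 ≤ v c := by
    have h1 : 0 ≤ v (c - 1) := (nsmul_nonneg (v.natCast_nonneg n) 2).trans hc.le
    simpa using v.map_le_add h1 (show 0 ≤ v 1 by simp)
  obtain ⟨y, -, hy⟩ := hv _ (v.coeff_X_pow_sub_C_nonneg hc0 n) 1 (by simp)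
    (by simpa [Polynomial.derivative_X_pow, ← v.map_neg (c - 1)] using hc)
  exact ⟨y, by simpa [sub_eq_zero] using hy⟩

end AddValuation

theorem root_of_henselian_for_integral_x_general
    {K Γ : Type*} [Field K] [AddCommGroup Γ] [LinearOrder Γ] [IsOrderedAddMonoid Γ]
    (v : AddValuation K (WithTop Γ)) (hhens : v.IsHenselian)
    (p : ℕ) (hp : p.Prime) (hres : 0 < v (p : K))
    (n : ℕ) (hpn : ¬ (p ∣ n)) :
    ∀ x : K, 0 ≤ v x → ∃ y : K, y ^ n - (p : K) * x ^ n - 1 = 0 := by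
  intro x hx
  have hval : 2 • v (n : K) < v ((p : K) * x ^ n + 1 - 1) := by
    rw [v.natCast_eq_zero_of_not_dvd hp hres hpn, add_sub_cancel_right, v.map_mul, v.map_pow,
      smul_zero]
    exact hres.trans_le (le_add_of_nonneg_right (nsmul_nonneg hx n))
  obtain ⟨y, hy⟩ := hhens.exists_pow_eq hval
  exact ⟨y, by rw [hy]; ring⟩

/-- The "if" direction of Bélair's lemma: in a Henselian valued field of characteristic
zero, residue characteristic `p > 0` and ramification index `e > 0`, for `n > e` not
divisible by `p`, the polynomial `y ^ n - p * x ^ n - 1` has a root in `K` for every `x`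
in the valuation ring. -/
theorem root_of_henselian_for_integral_x
    {K Γ : Type*} [Field K] [CharZero K] [AddCommGroup Γ] [LinearOrder Γ] [IsOrderedAddMonoid Γ]
    (v : AddValuation K (WithTop Γ)) (hhens : v.IsHenselian)
    (p : ℕ) (hp : p.Prime) (hres : 0 < v (p : K))
    (e : ℕ) (he : Nat.card {γ : Γ | 0 < γ ∧ (γ : WithTop Γ) ≤ v (p : K)} = e) (he0 : 0 < e)
    (n : ℕ) (hne : e < n) (hpn : ¬ (p ∣ n)) :
    ∀ x : K, 0 ≤ v x → ∃ y : K, y ^ n - (p : K) * x ^ n - 1 = 0 :=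
  root_of_henselian_for_integral_x_general v hhens p hp hres n hpn
end

section
/- Let K be a valued field of characteristic zero with residue characteristic p > 0. Let Δ be the smallest convex subgroup of the value group Γ containing v(p), and let v̇ : K → Γ/Δ ∪ {∞} be the coarse valuation, composing v with the quotient map Γ → Γ/Δ. Then the valuation ring O_{K̇} of v̇ equals the localization of O_K at the multiplicative set {p^m : m ∈ ℕ}; equivalently, it is the smallest subring of K containing O_K in which p is a unit. -/
/-!
Both sides are described by the same condition `∃ m : ℕ, -(m • v p) ≤ v x`. On the left, since
`v p ≥ 0`, an element of `Δ` below `v x` can be moved down to some `-(n • v p)`, which lies in `Δ`.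
On the right, `x = y / p ^ m` with `v y ≥ 0` says exactly that `v (x * p ^ m) = v x + m • v p ≥ 0`.
-/

lemma WithTop.coe_neg_le_iff_nonneg_add_coe {Γ : Type*} [AddCommGroup Γ] [LinearOrder Γ]
    [IsOrderedAddMonoid Γ] {a : WithTop Γ} {g : Γ} :
    ((-g : Γ) : WithTop Γ) ≤ a ↔ 0 ≤ a + g := by
  rw [← add_le_add_iff_left_of_ne_top (coe_ne_top (a := g)), ← coe_add, neg_add_cancel, coe_zero]

lemma exists_mem_nsmul_Icc_le_iff {Γ : Type*} [AddCommGroup Γ] [LinearOrder Γ]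
    [IsOrderedAddMonoid Γ] {γ : Γ} (hγ : 0 ≤ γ) (a : WithTop Γ) :
    (∃ δ ∈ {δ : Γ | ∃ n : ℕ, -(n • γ) ≤ δ ∧ δ ≤ n • γ}, (δ : WithTop Γ) ≤ a) ↔
      ∃ n : ℕ, ((-(n • γ) : Γ) : WithTop Γ) ≤ a := by
  constructor
  · rintro ⟨δ, ⟨n, hnδ, -⟩, hδa⟩
    exact ⟨n, (WithTop.coe_le_coe.mpr hnδ).trans hδa⟩
  · rintro ⟨n, hn⟩
    have hnγ : 0 ≤ n • γ := nsmul_nonneg hγ n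
    exact ⟨_, ⟨n, le_rfl, (neg_nonpos.mpr hnγ).trans hnγ⟩, hn⟩

lemma exists_and_eq_div_pow_iff {K : Type*} [Field K] {a : K} (ha : a ≠ 0) (P : K → Prop)
    (x : K) : (∃ (m : ℕ) (y : K), P y ∧ x = y / a ^ m) ↔ ∃ m : ℕ, P (x * a ^ m) := by
  simp only [eq_div_iff (pow_ne_zero _ ha), exists_eq_right']

lemma AddValuation.exists_nonneg_mul_pow_iff {K Γ : Type*} [Field K] [AddCommGroup Γ]
    [LinearOrder Γ] [IsOrderedAddMonoid Γ] (v : AddValuation K (WithTop Γ)) {a : K} {γ : Γ}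
    (ha : v a = γ) (x : K) :
    (∃ m : ℕ, 0 ≤ v (x * a ^ m)) ↔ ∃ m : ℕ, ((-(m • γ) : Γ) : WithTop Γ) ≤ v x := by
  simp only [v.map_mul, v.map_pow, ha, ← WithTop.coe_nsmul,
    WithTop.coe_neg_le_iff_nonneg_add_coe]

theorem coarse_valuation_ring_eq_localization_general
    {K Γ : Type*} [Field K] [AddCommGroup Γ] [LinearOrder Γ] [IsOrderedAddMonoid Γ]
    (v : AddValuation K (WithTop Γ))
    (p : ℕ) (hres : 0 < v (p : K))
    (γp : Γ) (hγp : v (p : K) = (γp : WithTop Γ))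
    -- `Δ` is the smallest convex subgroup of `Γ` containing `γp = v p`:
    (Δ : Set Γ) (hΔ : Δ = {γ : Γ | ∃ n : ℕ, -(n • γp) ≤ γ ∧ γ ≤ n • γp}) :
    {x : K | ∃ δ ∈ Δ, (δ : WithTop Γ) ≤ v x} =
      {x : K | ∃ (m : ℕ) (y : K), 0 ≤ v y ∧ x = y / (p : K) ^ m} := by
  have hγp_nonneg : 0 ≤ γp := WithTop.coe_nonneg.mp (hγp ▸ hres.le)
  have hp_ne_zero : (p : K) ≠ 0 := v.ne_top_iff.mp (hγp ▸ WithTop.coe_ne_top)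
  ext x
  rw [Set.mem_ofPred_eq, Set.mem_ofPred_eq, hΔ, exists_mem_nsmul_Icc_le_iff hγp_nonneg,
    exists_and_eq_div_pow_iff hp_ne_zero, v.exists_nonneg_mul_pow_iff hγp]

/-- For a valued field `K` of characteristic zero and residue characteristic `p > 0`, with
`Δ` the smallest convex subgroup of the value group containing `v p`, the valuation ring
`O_K̇ = {x : ∃ δ ∈ Δ, v x ≥ δ}` of the coarse valuation equals the localization of `O_K`
at the multiplicative set `{p ^ m : m ∈ ℕ}`, i.e. the set of elements `y / p ^ m` with
`y ∈ O_K`. -/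
theorem coarse_valuation_ring_eq_localization
    {K Γ : Type*} [Field K] [CharZero K] [AddCommGroup Γ] [LinearOrder Γ] [IsOrderedAddMonoid Γ]
    (v : AddValuation K (WithTop Γ))
    (p : ℕ) (hp : p.Prime) (hres : 0 < v (p : K))
    (γp : Γ) (hγp : v (p : K) = (γp : WithTop Γ))
    -- `Δ` is the smallest convex subgroup of `Γ` containing `γp = v p`:
    (Δ : Set Γ) (hΔ : Δ = {γ : Γ | ∃ n : ℕ, -(n • γp) ≤ γ ∧ γ ≤ n • γp}) :
    {x : K | ∃ δ ∈ Δ, (δ : WithTop Γ) ≤ v x} =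
      {x : K | ∃ (m : ℕ) (y : K), 0 ≤ v y ∧ x = y / (p : K) ^ m} :=
  coarse_valuation_ring_eq_localization_general v p hres γp hγp Δ hΔ
end

section
/- Let L be a field and g a polynomial in one variable over the prime subfield of L with splitting field F inside L^{alg}. Then the set G_g = {σ ∈ Gal(L^{alg}/L) : Fix(σ) contains no root of g} is open in the absolute Galois group Gal(L) with the Krull topology. -/
open Polynomial

theorem isOpen_setOf_forall_apply_ne {F K : Type*} [Field F] [Field K] [Algebra F K]
    [Algebra.IsIntegral F K] {s : Set K} (hs : s.Finite) :
    IsOpen {σ : Gal(K/F) | ∀ x ∈ s, σ x ≠ x} := by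
  have hfix (x : K) : IsClosed (MulAction.stabilizer Gal(K/F) x : Set Gal(K/F)) :=
    Subgroup.isClosed_of_isOpen _ (stabilizer_isOpen_of_isIntegral x)
  convert hs.isOpen_biInter fun x _ => (hfix x).isOpen_compl
  ext σ
  simp [MulAction.mem_stabilizer_iff]

/-- Let `L` be a field and `g` a polynomial in one variable over the prime subfield of `L`
(coded as an integer polynomial).  Then the set
`G_g = {σ ∈ Gal(L^alg/L) : Fix(σ) contains no root of g}` is open in the absolute Galois
group of `L` with the Krull topology.  (Here `Fix σ`, the fixed field of the closed
subgroup generated by `σ`, is the set of fixed points of `σ`.) -/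
theorem isOpen_no_fixed_root
    (L : Type*) [Field L] (g : Polynomial ℤ) :
    IsOpen {σ : AlgebraicClosure L ≃ₐ[L] AlgebraicClosure L |
      ¬ ∃ x : AlgebraicClosure L, Polynomial.aeval x g = 0 ∧ σ x = x} := by
  rcases eq_or_ne (g.map (algebraMap ℤ (AlgebraicClosure L))) 0 with hg | hg
  · -- `g` vanishes in the characteristic of `L`, so the fixed point `0` is a root.
    convert isOpen_empty
    ext σ
    simp only [Set.mem_ofPred_eq, Set.mem_empty_iff_false, iff_false, not_not]
    exact ⟨0, by rw [aeval_def, eval₂_eq_eval_map, hg, eval_zero], map_zero σ⟩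
  · convert isOpen_setOf_forall_apply_ne (F := L) (rootSet_finite g (AlgebraicClosure L))
      using 2 with σ
    simp [mem_rootSet', hg]
end
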